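/- Let ε̂ = (I-H)Y be the full-regression residual and ε̃ = (I-H̃2)Ỹ the partial-regression residual, and define σ̂² = ‖ε̂‖²/(n-K-L), σ̃² = ‖ε̃‖²/(n-L). Then the homoskedastic covariance estimator for β̂2 from the full regression, V̂ = σ̂² · [(X'X)^{-1}]_{22}, and that from the partial regression, Ṽ = σ̃²(X̃2'X̃2)^{-1}, satisfy (n-K-L)V̂ = (n-L)Ṽ. -/

import Mathlib

/-!
Write `H₁` for the hat matrix of `X₁` and `X₂' = (1 - H₁) X₂`. Since `X₂'ᵀ X₁ = 0`, the symmetric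
matrix `P = H₁ + H_{X₂'}` fixes the columns of `X = (X₁, X₂)`, while `H_X` fixes those of `X₁` and
`X₂'`; hence `P H_X = H_X` and `H_X P = P`, and transposing one identity gives `H_X = P`
(Frisch–Waugh–Lovell). So `1 - H_X = (1 - H_{X₂'})(1 - H₁)` and the two residual vectors coincide.
On the other side, the Schur complement of `X₁ᵀX₁` in `XᵀX` is `X₂'ᵀX₂'`, so the lower-right block
of `(XᵀX)⁻¹` is `(X₂'ᵀX₂')⁻¹`.
-/

open Matrix

variable {m k l R : Type*} [CommRing R]

section SchurComplement

variable [Fintype k] [Fintype l] [DecidableEq k] [DecidableEq l]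

theorem isUnit_fromBlocks_of_isUnit_schur₁₁ {A : Matrix k k R} {B : Matrix k l R}
    {C : Matrix l k R} {D : Matrix l l R} (hA : IsUnit A) (hS : IsUnit (D - C * A⁻¹ * B)) :
    IsUnit (fromBlocks A B C D) := by
  let := hA.invertible
  rwa [isUnit_fromBlocks_iff_of_invertible₁₁, invOf_eq_nonsing_inv]

theorem inv_fromBlocks_toBlocks₂₂ {A : Matrix k k R} {B : Matrix k l R}
    {C : Matrix l k R} {D : Matrix l l R} (hA : IsUnit A) (hS : IsUnit (D - C * A⁻¹ * B)) :
    (fromBlocks A B C D)⁻¹.toBlocks₂₂ = (D - C * A⁻¹ * B)⁻¹ := by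
  let := hA.invertible
  let : Invertible (D - C * ⅟A * B) := by rw [invOf_eq_nonsing_inv]; exact hS.invertible
  let := fromBlocks₁₁Invertible A B C D
  rw [← invOf_eq_nonsing_inv, invOf_fromBlocks₁₁_eq, toBlocks_fromBlocks₂₂, invOf_eq_nonsing_inv,
    invOf_eq_nonsing_inv]

end SchurComplement

theorem eq_of_mul_eq_right_of_mul_eq_left [Fintype m] {P Q : Matrix m m R}
    (hP : Pᵀ = P) (hQ : Qᵀ = Q) (hPQ : P * Q = Q) (hQP : Q * P = P) : P = Q := by
  rw [← hQP, ← hP, ← hQ, ← transpose_mul, hPQ, hQ]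

theorem transpose_fromCols_mul_fromCols [Fintype m] (X₁ : Matrix m k R) (X₂ : Matrix m l R) :
    (fromCols X₁ X₂)ᵀ * fromCols X₁ X₂
      = fromBlocks (X₁ᵀ * X₁) (X₁ᵀ * X₂) (X₂ᵀ * X₁) (X₂ᵀ * X₂) := by
  rw [transpose_fromCols, fromRows_mul_fromCols]

section hatMatrix

variable [Fintype m] [Fintype k] [DecidableEq k]

/-- The orthogonal projection onto the column space of `A` (when `Aᵀ * A` is invertible). -/
noncomputable def hatMatrix (A : Matrix m k R) : Matrix m m R := A * (Aᵀ * A)⁻¹ * Aᵀ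

variable {A : Matrix m k R}

theorem hatMatrix_transpose (A : Matrix m k R) : (hatMatrix A)ᵀ = hatMatrix A := by
  rw [hatMatrix, transpose_mul, transpose_mul, transpose_transpose, transpose_nonsing_inv,
    transpose_mul, transpose_transpose, Matrix.mul_assoc]

theorem hatMatrix_mul_self (hA : IsUnit (Aᵀ * A)) : hatMatrix A * A = A := by
  rw [hatMatrix, Matrix.mul_assoc, Matrix.mul_assoc,
    nonsing_inv_mul _ ((isUnit_iff_isUnit_det _).mp hA), Matrix.mul_one]

theorem mul_hatMatrix_of_mul_eq {P : Matrix m m R} (h : P * A = A) :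
    P * hatMatrix A = hatMatrix A := by
  rw [hatMatrix, ← Matrix.mul_assoc, ← Matrix.mul_assoc, h]

theorem transpose_mul_hatMatrix_eq_zero {B : Matrix m l R} (h : Bᵀ * A = 0) :
    Bᵀ * hatMatrix A = 0 := by
  rw [hatMatrix, ← Matrix.mul_assoc, ← Matrix.mul_assoc, h, Matrix.zero_mul, Matrix.zero_mul]

theorem hatMatrix_mul_hatMatrix (hA : IsUnit (Aᵀ * A)) : hatMatrix A * hatMatrix A = hatMatrix A :=
  mul_hatMatrix_of_mul_eq (hatMatrix_mul_self hA)

theorem one_sub_hatMatrix_transpose [DecidableEq m] (A : Matrix m k R) :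
    (1 - hatMatrix A)ᵀ = 1 - hatMatrix A := by
  rw [transpose_sub, transpose_one, hatMatrix_transpose]

theorem one_sub_hatMatrix_mul_self [DecidableEq m] (hA : IsUnit (Aᵀ * A)) :
    (1 - hatMatrix A) * A = 0 := by
  rw [Matrix.sub_mul, Matrix.one_mul, hatMatrix_mul_self hA, sub_self]

theorem one_sub_hatMatrix_mul_one_sub_hatMatrix [DecidableEq m] (hA : IsUnit (Aᵀ * A)) :
    (1 - hatMatrix A) * (1 - hatMatrix A) = 1 - hatMatrix A := by
  rw [Matrix.mul_sub, Matrix.mul_one, Matrix.sub_mul, Matrix.one_mul, hatMatrix_mul_hatMatrix hA,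
    sub_self, sub_zero]

theorem residual_transpose_mul_self_eq_zero [DecidableEq m] (hA : IsUnit (Aᵀ * A))
    (B : Matrix m l R) :
    ((1 - hatMatrix A) * B)ᵀ * A = 0 := by
  rw [transpose_mul, one_sub_hatMatrix_transpose, Matrix.mul_assoc,
    one_sub_hatMatrix_mul_self hA, Matrix.mul_zero]

theorem hatMatrix_residual_mul_hatMatrix [DecidableEq m] [Fintype l] [DecidableEq l]
    (hA : IsUnit (Aᵀ * A)) (B : Matrix m l R) :
    hatMatrix ((1 - hatMatrix A) * B) * hatMatrix A = 0 := by
  rw [hatMatrix, Matrix.mul_assoc,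
    transpose_mul_hatMatrix_eq_zero (residual_transpose_mul_self_eq_zero hA B), Matrix.mul_zero]

theorem residual_transpose_mul_residual [DecidableEq m] (hA : IsUnit (Aᵀ * A))
    (B : Matrix m l R) :
    ((1 - hatMatrix A) * B)ᵀ * ((1 - hatMatrix A) * B)
      = Bᵀ * B - Bᵀ * A * (Aᵀ * A)⁻¹ * (Aᵀ * B) := by
  rw [transpose_mul, one_sub_hatMatrix_transpose, Matrix.mul_assoc, ← Matrix.mul_assoc _ _ B,
    one_sub_hatMatrix_mul_one_sub_hatMatrix hA, Matrix.sub_mul, Matrix.one_mul, Matrix.mul_sub,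
    hatMatrix]
  simp only [Matrix.mul_assoc]

end hatMatrix

section FrischWaughLovell

variable [Fintype m] [Fintype k] [Fintype l] [DecidableEq m] [DecidableEq k] [DecidableEq l]
  {X₁ : Matrix m k R} {X₂ : Matrix m l R}

theorem isUnit_transpose_fromCols_mul_fromCols (h₁ : IsUnit (X₁ᵀ * X₁))
    (h₂ : IsUnit (((1 - hatMatrix X₁) * X₂)ᵀ * ((1 - hatMatrix X₁) * X₂))) :
    IsUnit ((fromCols X₁ X₂)ᵀ * fromCols X₁ X₂) := by
  rw [residual_transpose_mul_residual h₁] at h₂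
  rw [transpose_fromCols_mul_fromCols]
  exact isUnit_fromBlocks_of_isUnit_schur₁₁ h₁ h₂

theorem inv_transpose_fromCols_mul_fromCols_toBlocks₂₂ (h₁ : IsUnit (X₁ᵀ * X₁))
    (h₂ : IsUnit (((1 - hatMatrix X₁) * X₂)ᵀ * ((1 - hatMatrix X₁) * X₂))) :
    ((fromCols X₁ X₂)ᵀ * fromCols X₁ X₂)⁻¹.toBlocks₂₂
      = (((1 - hatMatrix X₁) * X₂)ᵀ * ((1 - hatMatrix X₁) * X₂))⁻¹ := by
  rw [residual_transpose_mul_residual h₁] at h₂ ⊢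
  rw [transpose_fromCols_mul_fromCols]
  exact inv_fromBlocks_toBlocks₂₂ h₁ h₂

theorem hatMatrix_fromCols (h₁ : IsUnit (X₁ᵀ * X₁))
    (h₂ : IsUnit (((1 - hatMatrix X₁) * X₂)ᵀ * ((1 - hatMatrix X₁) * X₂))) :
    hatMatrix (fromCols X₁ X₂) = hatMatrix X₁ + hatMatrix ((1 - hatMatrix X₁) * X₂) := by
  set H₁ := hatMatrix X₁
  set X₂' := (1 - H₁) * X₂ with hX₂'
  set H := hatMatrix (fromCols X₁ X₂)
  have hX₂'X₁ : X₂'ᵀ * X₁ = 0 := residual_transpose_mul_self_eq_zero h₁ X₂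
  have hH₂H₁ : hatMatrix X₂' * H₁ = 0 := hatMatrix_residual_mul_hatMatrix h₁ X₂
  have hH₂X₁ : hatMatrix X₂' * X₁ = 0 := by
    rw [hatMatrix, Matrix.mul_assoc, hX₂'X₁, Matrix.mul_zero]
  have hX₂ : X₂ = X₂' + H₁ * X₂ := by
    rw [hX₂', Matrix.sub_mul, Matrix.one_mul, sub_add_cancel]
  have hH₂X₂ : hatMatrix X₂' * X₂ = X₂' := by
    conv_lhs => rw [hX₂]
    rw [Matrix.mul_add, hatMatrix_mul_self h₂, ← Matrix.mul_assoc, hH₂H₁, Matrix.zero_mul,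
      add_zero]
  have hPX : (H₁ + hatMatrix X₂') * fromCols X₁ X₂ = fromCols X₁ X₂ := by
    rw [mul_fromCols, Matrix.add_mul, Matrix.add_mul, hatMatrix_mul_self h₁, hH₂X₁, add_zero,
      hH₂X₂, add_comm, ← hX₂]
  have hHX : H * X₁ = X₁ ∧ H * X₂ = X₂ := by
    have h := hatMatrix_mul_self (isUnit_transpose_fromCols_mul_fromCols h₁ h₂)
    rwa [mul_fromCols, fromCols_ext_iff] at h
  have hHX₂' : H * X₂' = X₂' := by
    rw [hX₂', ← Matrix.mul_assoc, Matrix.mul_sub, Matrix.mul_one, mul_hatMatrix_of_mul_eq hHX.1,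
      Matrix.sub_mul, hHX.2, Matrix.sub_mul, Matrix.one_mul]
  refine eq_of_mul_eq_right_of_mul_eq_left (hatMatrix_transpose _) ?_ ?_
    (mul_hatMatrix_of_mul_eq hPX)
  · rw [transpose_add, hatMatrix_transpose, hatMatrix_transpose]
  · rw [Matrix.mul_add, mul_hatMatrix_of_mul_eq hHX.1, mul_hatMatrix_of_mul_eq hHX₂']

theorem one_sub_hatMatrix_fromCols (h₁ : IsUnit (X₁ᵀ * X₁))
    (h₂ : IsUnit (((1 - hatMatrix X₁) * X₂)ᵀ * ((1 - hatMatrix X₁) * X₂))) :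
    1 - hatMatrix (fromCols X₁ X₂)
      = (1 - hatMatrix ((1 - hatMatrix X₁) * X₂)) * (1 - hatMatrix X₁) := by
  have hH₂H₁ := hatMatrix_residual_mul_hatMatrix h₁ X₂
  rw [hatMatrix_fromCols h₁ h₂]
  set X₂' := (1 - hatMatrix X₁) * X₂
  rw [Matrix.mul_sub, Matrix.mul_one, Matrix.sub_mul, Matrix.one_mul, hH₂H₁]
  abel

end FrischWaughLovell

theorem stmt_7_general {n K L : ℕ} (hn : K + L < n)
    (X1 : Matrix (Fin n) (Fin K) ℝ) (X2 : Matrix (Fin n) (Fin L) ℝ) (Y : Fin n → ℝ)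
    (X : Matrix (Fin n) (Fin K ⊕ Fin L) ℝ) (hX : X = Matrix.fromCols X1 X2)
    (H : Matrix (Fin n) (Fin n) ℝ) (hH : H = X * (Xᵀ * X)⁻¹ * Xᵀ)
    (H1 : Matrix (Fin n) (Fin n) ℝ) (hH1 : H1 = X1 * (X1ᵀ * X1)⁻¹ * X1ᵀ)
    (X2t : Matrix (Fin n) (Fin L) ℝ) (hX2t : X2t = (1 - H1) * X2)
    (H2t : Matrix (Fin n) (Fin n) ℝ) (hH2t : H2t = X2t * (X2tᵀ * X2t)⁻¹ * X2tᵀ)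
    (Yt : Fin n → ℝ) (hYt : Yt = (1 - H1) *ᵥ Y)
    (epsHat : Fin n → ℝ) (hepsHat : epsHat = (1 - H) *ᵥ Y)
    (epsTilde : Fin n → ℝ) (hepsTilde : epsTilde = (1 - H2t) *ᵥ Yt)
    (sigmaHatSq : ℝ) (hsigmaHatSq : sigmaHatSq = (∑ i, epsHat i ^ 2) / ((n : ℝ) - K - L))
    (sigmaTildeSq : ℝ) (hsigmaTildeSq : sigmaTildeSq = (∑ i, epsTilde i ^ 2) / ((n : ℝ) - L))
    (VHat : Matrix (Fin L) (Fin L) ℝ) (hVHat : VHat = sigmaHatSq • ((Xᵀ * X)⁻¹).toBlocks₂₂)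
    (VTilde : Matrix (Fin L) (Fin L) ℝ) (hVTilde : VTilde = sigmaTildeSq • (X2tᵀ * X2t)⁻¹)
    (hG1 : IsUnit (X1ᵀ * X1)) (hG2 : IsUnit (X2tᵀ * X2t)) :
    ((n : ℝ) - K - L) • VHat = ((n : ℝ) - L) • VTilde := by
  replace hH : H = hatMatrix X := hH
  replace hH1 : H1 = hatMatrix X1 := hH1
  replace hH2t : H2t = hatMatrix X2t := hH2t
  subst hX hH hH1 hX2t hH2t hYt hepsHat hepsTilde hsigmaHatSq hsigmaTildeSq hVHat hVTilde
  have hn' : (K : ℝ) + L < n := by exact_mod_cast hn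
  have hnKL : (n : ℝ) - K - L ≠ 0 := by linarith
  have hnL : (n : ℝ) - L ≠ 0 := by linarith [(K.cast_nonneg : (0 : ℝ) ≤ K)]
  rw [inv_transpose_fromCols_mul_fromCols_toBlocks₂₂ hG1 hG2, mulVec_mulVec,
    ← one_sub_hatMatrix_fromCols hG1 hG2, smul_smul, smul_smul, mul_div_cancel₀ _ hnKL,
    mul_div_cancel₀ _ hnL]

theorem stmt_7 {n K L : ℕ} (hn : K + L < n)
    (X1 : Matrix (Fin n) (Fin K) ℝ) (X2 : Matrix (Fin n) (Fin L) ℝ) (Y : Fin n → ℝ)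
    (X : Matrix (Fin n) (Fin K ⊕ Fin L) ℝ) (hX : X = Matrix.fromCols X1 X2)
    (H : Matrix (Fin n) (Fin n) ℝ) (hH : H = X * (Xᵀ * X)⁻¹ * Xᵀ)
    (H1 : Matrix (Fin n) (Fin n) ℝ) (hH1 : H1 = X1 * (X1ᵀ * X1)⁻¹ * X1ᵀ)
    (X2t : Matrix (Fin n) (Fin L) ℝ) (hX2t : X2t = (1 - H1) * X2)
    (H2t : Matrix (Fin n) (Fin n) ℝ) (hH2t : H2t = X2t * (X2tᵀ * X2t)⁻¹ * X2tᵀ)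
    (Yt : Fin n → ℝ) (hYt : Yt = (1 - H1) *ᵥ Y)
    (epsHat : Fin n → ℝ) (hepsHat : epsHat = (1 - H) *ᵥ Y)
    (epsTilde : Fin n → ℝ) (hepsTilde : epsTilde = (1 - H2t) *ᵥ Yt)
    (sigmaHatSq : ℝ) (hsigmaHatSq : sigmaHatSq = (∑ i, epsHat i ^ 2) / ((n : ℝ) - K - L))
    (sigmaTildeSq : ℝ) (hsigmaTildeSq : sigmaTildeSq = (∑ i, epsTilde i ^ 2) / ((n : ℝ) - L))
    (VHat : Matrix (Fin L) (Fin L) ℝ) (hVHat : VHat = sigmaHatSq • ((Xᵀ * X)⁻¹).toBlocks₂₂)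
    (VTilde : Matrix (Fin L) (Fin L) ℝ) (hVTilde : VTilde = sigmaTildeSq • (X2tᵀ * X2t)⁻¹)
    (hGX : IsUnit (Xᵀ * X)) (hG1 : IsUnit (X1ᵀ * X1)) (hG2 : IsUnit (X2tᵀ * X2t)) :
    ((n : ℝ) - K - L) • VHat = ((n : ℝ) - L) • VTilde :=
  stmt_7_general hn X1 X2 Y X hX H hH H1 hH1 X2t hX2t H2t hH2t Yt hYt epsHat hepsHat epsTilde
    hepsTilde sigmaHatSq hsigmaHatSq sigmaTildeSq hsigmaTildeSq VHat hVHat VTilde hVTilde hG1 hG2
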